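/- arXiv:2505.02575 — 7 statements merged into one kernel-verified Lean document; each statement's English description precedes it below -/
import Mathlib

section
/- Let (Ā, b̄) ∈ ℝ^{m×n} × ℝᵐ with F(Ā,b̄) ≠ ∅ and fix x ∈ ℝⁿ. Then the distance from (Ā,b̄) to F⁻¹(x) = {(A,b) : Ax ≤ b} equals ‖(Āx − b̄)₊‖_∞ / (‖x‖ + 1), where the parameter space ℝ^{m×n} × ℝᵐ is endowed with the norm ‖(A,b)‖ = max_t max{‖a_t‖_*, |b_t|}. -/
open Metric

/-!
A row `a' x ≤ β'` that is feasible at `x` can only lie at distance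
`max ‖a - a'‖ |β - β'| ≥ (a x - β)₊ / (‖x‖ + 1)` from the nominal row `(a, β)`, since
`a x - β ≤ (a - a') x + (β' - β) ≤ ‖a - a'‖ ‖x‖ + |β - β'|`. Conversely, with a norming
functional `u` (`‖u‖ ≤ 1`, `u x = ‖x‖`, from Hahn–Banach), shifting every row by
`s • u` and the right-hand side by `s`, where `s = (a x - β)₊ / (‖x‖ + 1)`, makes `x`
feasible at distance exactly `s`. Taking the maximum over the rows gives the formula.
-/

section RowPerturbation

variable {E : Type*} [NormedAddCommGroup E] [NormedSpace ℝ E]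

lemma sub_le_max_norm_sub_abs_sub_mul {a a' : E →L[ℝ] ℝ} {β β' : ℝ} {x : E}
    (h : a' x ≤ β') : a x - β ≤ max ‖a - a'‖ |β - β'| * (‖x‖ + 1) := by
  have hA : a x - a' x ≤ ‖a - a'‖ * ‖x‖ :=
    (le_abs_self _).trans ((a - a').le_opNorm x)
  have hb : β' - β ≤ |β - β'| := abs_sub_comm β β' ▸ le_abs_self _
  have := le_max_left ‖a - a'‖ |β - β'|
  have := le_max_right ‖a - a'‖ |β - β'|
  nlinarith [norm_nonneg x]

lemma iSup_max_sub_zero_le_mul {ι : Type*} [Finite ι] {A A' : ι → E →L[ℝ] ℝ}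
    {b b' : ι → ℝ} {x : E} (h : ∀ t, A' t x ≤ b' t) :
    ⨆ t, max (A t x - b t) 0 ≤ (⨆ t, max ‖A t - A' t‖ |b t - b' t|) * (‖x‖ + 1) := by
  have hk : 0 ≤ ‖x‖ + 1 := by positivity
  set D : ι → ℝ := fun t => max ‖A t - A' t‖ |b t - b' t| * (‖x‖ + 1)
  have hD (t : ι) : 0 ≤ D t := mul_nonneg ((norm_nonneg _).trans (le_max_left _ _)) hk
  have hle (t : ι) : D t ≤ ⨆ t, D t := le_ciSup (Finite.bddAbove_range D) t
  rw [Real.iSup_mul_of_nonneg hk]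
  exact Real.iSup_le (fun t => max_le ((sub_le_max_norm_sub_abs_sub_mul (h t)).trans (hle t))
    ((hD t).trans (hle t))) (Real.iSup_nonneg hD)

section Shift

variable {u : E →L[ℝ] ℝ} {x : E} (a : E →L[ℝ] ℝ) (β : ℝ)

lemma sub_smul_apply_le_add_max_sub_zero_div (hux : u x = ‖x‖) :
    (a - (max (a x - β) 0 / (‖x‖ + 1)) • u) x ≤ β + max (a x - β) 0 / (‖x‖ + 1) := by
  have hs : max (a x - β) 0 / (‖x‖ + 1) * (‖x‖ + 1) = max (a x - β) 0 :=
    div_mul_cancel₀ _ (by positivity)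
  have := le_max_left (a x - β) 0
  simp only [sub_apply, smul_apply, hux, smul_eq_mul]
  nlinarith

lemma max_norm_sub_abs_sub_smul_eq {s : ℝ} (hu : ‖u‖ ≤ 1) (hs : 0 ≤ s) :
    max ‖a - (a - s • u)‖ |β - (β + s)| = s := by
  have : s * ‖u‖ ≤ s := mul_le_of_le_one_right hs hu
  rw [sub_sub_cancel, norm_smul, Real.norm_of_nonneg hs, sub_add_cancel_left, abs_neg,
    abs_of_nonneg hs, max_eq_right this]

end Shift

end RowPerturbation

theorem stmt1_general {E : Type*} [NormedAddCommGroup E] [NormedSpace ℝ E]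
    {m : ℕ}
    (Abar : Fin m → (E →L[ℝ] ℝ)) (bbar : Fin m → ℝ)
    (x : E) :
    sInf {d : ℝ | ∃ (A : Fin m → (E →L[ℝ] ℝ)) (b : Fin m → ℝ),
        (∀ t, A t x ≤ b t) ∧
        d = ⨆ t : Fin m, max ‖Abar t - A t‖ |bbar t - b t|} =
      (⨆ t : Fin m, max (Abar t x - bbar t) 0) / (‖x‖ + 1) := by
  obtain ⟨u, hu, hux⟩ := exists_dual_vector'' ℝ x
  have hk : 0 < ‖x‖ + 1 := by positivity
  set s : Fin m → ℝ := fun t => max (Abar t x - bbar t) 0 / (‖x‖ + 1)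
  refine IsLeast.csInf_eq ⟨⟨fun t => Abar t - s t • u, fun t => bbar t + s t,
    fun t => sub_smul_apply_le_add_max_sub_zero_div _ _ hux, ?_⟩, ?_⟩
  · have hshift (t : Fin m) :
        max ‖Abar t - (Abar t - s t • u)‖ |bbar t - (bbar t + s t)| = s t :=
      max_norm_sub_abs_sub_smul_eq _ _ hu (div_nonneg (le_max_right _ _) hk.le)
    calc (⨆ t, max (Abar t x - bbar t) 0) / (‖x‖ + 1) = ⨆ t, s t := by
          simp only [s, div_eq_mul_inv, Real.iSup_mul_of_nonneg (inv_nonneg.2 hk.le)]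
      _ = _ := iSup_congr fun t => (hshift t).symm
  · rintro d ⟨A, b, hA, rfl⟩
    exact (div_le_iff₀ hk).2 (iSup_max_sub_zero_le_mul hA)

/-- Distance formula from a nominal parameter `(Ā, b̄)` to the set of parameters
making a fixed point `x` feasible, under full perturbations.  The space of
variables is a finite-dimensional real normed space `E` with an arbitrary norm;
the rows of the matrix are viewed as continuous linear functionals on `E`
(whose operator norm is the dual norm), and the parameter space carries the norm
`‖(A,b)‖ = max_t max {‖a_t‖_*, |b_t|}`. -/
theorem stmt1 {E : Type*} [NormedAddCommGroup E] [NormedSpace ℝ E]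
    [FiniteDimensional ℝ E] {m : ℕ} [NeZero m]
    (Abar : Fin m → (E →L[ℝ] ℝ)) (bbar : Fin m → ℝ)
    (hdom : ∃ z : E, ∀ t, Abar t z ≤ bbar t) (x : E) :
    sInf {d : ℝ | ∃ (A : Fin m → (E →L[ℝ] ℝ)) (b : Fin m → ℝ),
        (∀ t, A t x ≤ b t) ∧
        d = ⨆ t : Fin m, max ‖Abar t - A t‖ |bbar t - b t|} =
      (⨆ t : Fin m, max (Abar t x - bbar t) 0) / (‖x‖ + 1) :=
  stmt1_general Abar bbar x
end

section
/- There exists a set-valued mapping M : ℝ ⇉ ℝ such that clm M(y,x) = 0 for every (y,x) in the graph of M, yet Lipusc M(0) = +∞. Concretely, M(y) = {0} for y ≤ 0 and M(y) = {1} for y > 0 has this property. -/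
open Metric ENNReal

/-- Lipschitz upper semicontinuity modulus of a set-valued mapping `M` at `ȳ ∈ dom M`:
the infimum (in `ℝ≥0∞`, so `inf ∅ = ∞`) of constants `κ ≥ 0` such that for some
neighborhood `V` of `ȳ`, `dist(x, M(ȳ)) ≤ κ dist(y, ȳ)` for all `y ∈ V`, `x ∈ M(y)`. -/
noncomputable def lipusc {Y X : Type*} [MetricSpace Y] [MetricSpace X]
    (M : Y → Set X) (ybar : Y) : ℝ≥0∞ :=
  sInf (ENNReal.ofReal '' {κ : ℝ | 0 ≤ κ ∧ ∃ V ∈ nhds ybar,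
    ∀ y ∈ V, ∀ x ∈ M y, infDist x (M ybar) ≤ κ * dist y ybar})

/-- Calmness modulus of `M` at `(ȳ, x̄) ∈ gph M`. -/
noncomputable def clmod {Y X : Type*} [MetricSpace Y] [MetricSpace X]
    (M : Y → Set X) (ybar : Y) (xbar : X) : ℝ≥0∞ :=
  sInf (ENNReal.ofReal '' {κ : ℝ | 0 ≤ κ ∧ ∃ V ∈ nhds ybar, ∃ U ∈ nhds xbar,
    ∀ y ∈ V, ∀ x ∈ M y ∩ U, infDist x (M ybar) ≤ κ * dist y ybar})

/-!
Calmness only sees the graph of `M` near `(ȳ, x̄)`. Since `M` takes its values in the finite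
set `{0, 1}`, near `x̄` the graph is the horizontal line `ℝ × {x̄}`, which is calm with modulus
`0`. Lipschitz upper semicontinuity at `0` sees all of `M y` for `y` near `0`, and the jump from
`0` to `1` for `y > 0` cannot be bounded by `κ |y|`.
-/

open Filter Topology

section Moduli

variable {Y X : Type*} [MetricSpace Y] [MetricSpace X] {M : Y → Set X} {ybar : Y} {xbar : X}

theorem clmod_eq_zero_of_subset
    (h : ∃ V ∈ 𝓝 ybar, ∃ U ∈ 𝓝 xbar, ∀ y ∈ V, M y ∩ U ⊆ M ybar) :
    clmod M ybar xbar = 0 := by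
  obtain ⟨V, hV, U, hU, hsub⟩ := h
  refine nonpos_iff_eq_zero.1
    (sInf_le ⟨0, ⟨le_rfl, V, hV, U, hU, fun y hy x hx => ?_⟩, ofReal_zero⟩)
  rw [infDist_zero_of_mem (hsub y hy hx), zero_mul]

theorem clmod_eq_zero_of_subset_finite {S : Set X} (hS : S.Finite) (hMS : ∀ y, M y ⊆ S)
    (hx : xbar ∈ M ybar) : clmod M ybar xbar = 0 := by
  have hU : (S \ {xbar})ᶜ ∈ 𝓝 xbar :=
    (hS.sdiff.isClosed).compl_mem_nhds fun h => h.2 rfl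
  refine clmod_eq_zero_of_subset ⟨Set.univ, univ_mem, _, hU, fun y _ x ⟨hxy, hxU⟩ => ?_⟩
  have : x = xbar := by_contra fun hne => hxU ⟨hMS y hxy, hne⟩
  exact this ▸ hx

theorem lipusc_eq_top_of_frequently {δ : ℝ} (hδ : 0 < δ)
    (h : ∃ᶠ y in 𝓝 ybar, ∃ x ∈ M y, δ ≤ infDist x (M ybar)) : lipusc M ybar = ⊤ := by
  rw [lipusc, sInf_eq_top]
  rintro _ ⟨κ, ⟨hκ, V, hV, hMV⟩, -⟩
  exfalso
  have hball : ball ybar (δ / (κ + 1)) ∈ 𝓝 ybar := ball_mem_nhds _ (by positivity)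
  obtain ⟨y, ⟨x, hx, hδx⟩, hyV, hy⟩ := (h.and_eventually (inter_mem hV hball)).exists
  have hdist : κ * dist y ybar < δ :=
    calc κ * dist y ybar ≤ κ * (δ / (κ + 1)) := by gcongr; exact (mem_ball.1 hy).le
      _ < δ := by rw [mul_div_assoc', div_lt_iff₀ (by positivity)]; linarith
  linarith [hMV y hyV x hx]

end Moduli

/-- There is a multifunction `M : ℝ ⇉ ℝ` with zero calmness modulus at every point
of its graph but infinite Lipschitz upper semicontinuity modulus at `0`:
`M(y) = {0}` for `y ≤ 0` and `M(y) = {1}` for `y > 0`. -/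
theorem stmt4 :
    ∃ M : ℝ → Set ℝ,
      M = (fun y => if y ≤ 0 then ({0} : Set ℝ) else {1}) ∧
      (∀ y x, x ∈ M y → clmod M y x = 0) ∧ lipusc M 0 = ⊤ := by
  set M : ℝ → Set ℝ := fun y => if y ≤ 0 then ({0} : Set ℝ) else {1}
  have hM01 : ∀ y, M y ⊆ {0, 1} := fun y => by
    by_cases hy : y ≤ 0 <;> simp [M, hy]
  have hjump : ∀ᶠ y in 𝓝[>] (0 : ℝ), ∃ x ∈ M y, 1 ≤ infDist x (M 0) :=
    eventually_nhdsWithin_of_forall fun y (hy : 0 < y) =>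
      ⟨1, by simp [M, not_le.2 hy], by simp [M, infDist_singleton]⟩
  exact ⟨M, rfl, fun y x hx => clmod_eq_zero_of_subset_finite (Set.toFinite _) hM01 hx,
    lipusc_eq_top_of_frequently one_pos (hjump.frequently.filter_mono nhdsWithin_le_nhds)⟩
end

section
/- Let M : Y ⇉ X with Y a normed space, X a reflexive Banach space, gph M nonempty and convex, and let ȳ ∈ dom M be such that M(ȳ) is closed. Then Lipusc M(ȳ) = sup_{x ∈ M(ȳ)} clm M(ȳ, x). -/
open Metric ENNReal

/-!
Every constant admissible for `lipusc` is admissible for `clmod`, which gives one inequality.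
Conversely, fix `x ∈ M y` with `y ≠ ȳ` and let `p` be a point of `M ȳ` nearest to `x`; it exists
because bounded closed convex sets of a reflexive space are weakly compact. Convexity of the graph
puts `p + s • (x - p)` in `M (ȳ + s • (y - ȳ))`, and the nearest-point property keeps it at
distance at least `s * dist x (M ȳ)` from `M ȳ`, while `ȳ + s • (y - ȳ)` is at distance
`s * dist y ȳ` from `ȳ`. Letting `s → 0` gives `clm M (ȳ, p) ≥ dist x (M ȳ) / dist y ȳ`, so the
supremum of the calmness moduli is a global constant for `lipusc`.
-/

namespace NormedSpace

variable {X : Type*} [NormedAddCommGroup X] [NormedSpace ℝ X]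

theorem surjective_inclusionInDoubleDualWeak
    (hrefl : Function.Surjective (inclusionInDoubleDual ℝ X)) :
    Function.Surjective (inclusionInDoubleDualWeak ℝ X) := by
  intro Φ
  obtain ⟨p, hp⟩ := hrefl (WeakDual.toStrongDual Φ)
  exact ⟨toWeakSpace ℝ X p, DFunLike.ext _ _ (DFunLike.congr_fun hp)⟩

theorem isCompact_image_toWeakSpace_of_surjective
    (hrefl : Function.Surjective (inclusionInDoubleDual ℝ X)) {S : Set X}
    (hbdd : Bornology.IsBounded S) (hconv : Convex ℝ S) (hcl : IsClosed S) :
    IsCompact (toWeakSpace ℝ X '' S) := by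
  have h := isCompact_closure_of_isBounded ℝ X (toWeakSpace ℝ X '' S)
    (by rwa [Set.preimage_image_eq _ (toWeakSpace ℝ X).injective])
    ((surjective_inclusionInDoubleDualWeak hrefl).range_eq ▸ Set.subset_univ _)
  rwa [← hconv.toWeakSpace_closure ℝ, hcl.closure_eq] at h

theorem nonempty_iInter_of_surjective
    (hrefl : Function.Surjective (inclusionInDoubleDual ℝ X))
    {ι : Type*} [Nonempty ι] {S : ι → Set X} (hdir : Directed (· ⊇ ·) S)
    (hne : ∀ i, (S i).Nonempty) (hbdd : ∀ i, Bornology.IsBounded (S i))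
    (hconv : ∀ i, Convex ℝ (S i)) (hcl : ∀ i, IsClosed (S i)) :
    (⋂ i, S i).Nonempty := by
  have h := IsCompact.nonempty_iInter_of_directed_nonempty_isCompact_isClosed
    (fun i => toWeakSpace ℝ X '' S i)
    (hdir.mono_comp (g := (toWeakSpace ℝ X '' ·)) _ fun _ _ => Set.image_mono)
    (fun i => (hne i).image _)
    (fun i => isCompact_image_toWeakSpace_of_surjective hrefl (hbdd i) (hconv i) (hcl i))
    (fun i => by
      rw [← (hcl i).closure_eq, (hconv i).toWeakSpace_closure ℝ]; exact isClosed_closure)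
  rwa [← Set.image_iInter (toWeakSpace ℝ X).bijective, Set.image_nonempty] at h

theorem exists_dist_eq_infDist_of_surjective
    (hrefl : Function.Surjective (inclusionInDoubleDual ℝ X)) {C : Set X}
    (hne : C.Nonempty) (hconv : Convex ℝ C) (hcl : IsClosed C) (x : X) :
    ∃ p ∈ C, dist x p = infDist x C := by
  let S : Set.Ioi (0 : ℝ) → Set X := fun ε => C ∩ closedBall x (infDist x C + ε)
  have hS : (⋂ ε, S ε).Nonempty := by
    refine nonempty_iInter_of_surjective hrefl ?_ (fun ε => ?_)
      (fun ε => isBounded_closedBall.subset Set.inter_subset_right)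
      (fun ε => hconv.inter (convex_closedBall _ _)) (fun ε => hcl.inter isClosed_closedBall)
    · exact Monotone.directed_ge fun ε ε' h =>
        Set.inter_subset_inter_right _ (closedBall_subset_closedBall (by simpa using h))
    · obtain ⟨q, hqC, hq⟩ := (infDist_lt_iff hne).1 (lt_add_of_pos_right (infDist x C) ε.2)
      exact ⟨q, hqC, mem_closedBall'.2 hq.le⟩
  obtain ⟨p, hp⟩ := hS
  have hpS (ε : Set.Ioi (0 : ℝ)) : p ∈ S ε := Set.mem_iInter.1 hp ε
  have hpC : p ∈ C := (hpS ⟨1, Set.mem_Ioi.2 one_pos⟩).1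
  refine ⟨p, hpC, le_antisymm ?_ (infDist_le_dist_of_mem hpC)⟩
  refine le_of_forall_pos_le_add fun ε hε => ?_
  rw [dist_comm]
  exact (hpS ⟨ε, hε⟩).2

end NormedSpace

theorem mul_infDist_le_infDist_lineMap {X : Type*} [NormedAddCommGroup X] [NormedSpace ℝ X]
    {C : Set X} (hC : C.Nonempty) {x p : X} (hp : dist x p = infDist x C) {s : ℝ} (hs : s ≤ 1) :
    s * infDist x C ≤ infDist (AffineMap.lineMap p x s) C := by
  refine (le_infDist hC).2 fun q hq => ?_
  have hx : dist (AffineMap.lineMap p x s) x = (1 - s) * infDist x C := by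
    rw [dist_lineMap_right, Real.norm_of_nonneg (sub_nonneg.2 hs), dist_comm, hp]
  linarith [infDist_le_dist_of_mem (x := x) hq, dist_triangle_left x q (AffineMap.lineMap p x s)]

section Moduli

variable {Y X : Type*} [MetricSpace Y] [MetricSpace X] {M : Y → Set X} {ybar : Y} {xbar : X}

theorem clmod_le_lipusc (M : Y → Set X) (ybar : Y) (xbar : X) :
    clmod M ybar xbar ≤ lipusc M ybar :=
  sInf_le_sInf <| Set.image_mono fun _ ⟨hκ, V, hV, H⟩ =>
    ⟨hκ, V, hV, Set.univ, Filter.univ_mem, fun y hy x hx => H y hy x hx.1⟩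

theorem lipusc_le_ofReal {κ : ℝ} (hκ : 0 ≤ κ)
    (h : ∀ y, ∀ x ∈ M y, infDist x (M ybar) ≤ κ * dist y ybar) :
    lipusc M ybar ≤ ENNReal.ofReal κ :=
  sInf_le ⟨κ, ⟨hκ, Set.univ, Filter.univ_mem, fun y _ => h y⟩, rfl⟩

theorem ofReal_le_clmod {c : ℝ}
    (h : ∀ V ∈ nhds ybar, ∀ U ∈ nhds xbar, ∃ y ∈ V, ∃ x ∈ M y ∩ U,
      0 < dist y ybar ∧ c * dist y ybar ≤ infDist x (M ybar)) :
    ENNReal.ofReal c ≤ clmod M ybar xbar := by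
  refine le_sInf ?_
  rintro _ ⟨κ, ⟨-, V, hV, U, hU, H⟩, rfl⟩
  obtain ⟨y, hy, x, hx, hpos, hc⟩ := h V hV U hU
  exact ENNReal.ofReal_le_ofReal (le_of_mul_le_mul_right (hc.trans (H y hy x hx)) hpos)

end Moduli

section SetValued

variable {Y X : Type*} [NormedAddCommGroup Y] [NormedSpace ℝ Y]
  [NormedAddCommGroup X] [NormedSpace ℝ X] {M : Y → Set X}

open AffineMap Filter Topology

theorem lineMap_mem_of_convex_graph (hgph : Convex ℝ {p : Y × X | p.2 ∈ M p.1})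
    {y y' : Y} {x x' : X} (hx : x ∈ M y) (hx' : x' ∈ M y') {s : ℝ} (hs : s ∈ Set.Icc 0 1) :
    lineMap x x' s ∈ M (lineMap y y' s) := by
  simpa [lineMap_apply_module] using hgph.lineMap_mem (x := (y, x)) (y := (y', x')) hx hx' hs

theorem Convex.convex_apply (hgph : Convex ℝ {p : Y × X | p.2 ∈ M p.1}) (y : Y) :
    Convex ℝ (M y) :=
  hgph.affine_preimage ((AffineMap.const ℝ X y).prod (AffineMap.id ℝ X))

theorem ofReal_infDist_div_dist_le_clmod
    (hgph : Convex ℝ {p : Y × X | p.2 ∈ M p.1}) {y ybar : Y} {x p : X} (hx : x ∈ M y)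
    (hp : p ∈ M ybar) (hpx : dist x p = infDist x (M ybar)) (hy : y ≠ ybar) :
    ENNReal.ofReal (infDist x (M ybar) / dist y ybar) ≤ clmod M ybar p := by
  refine ofReal_le_clmod fun V hV U hU => ?_
  have hV' : ∀ᶠ s in 𝓝[>] (0 : ℝ), lineMap ybar y s ∈ V :=
    (lineMap_continuous.tendsto' 0 ybar (lineMap_apply_zero _ _)).mono_left
      nhdsWithin_le_nhds hV
  have hU' : ∀ᶠ s in 𝓝[>] (0 : ℝ), lineMap p x s ∈ U :=
    (lineMap_continuous.tendsto' 0 p (lineMap_apply_zero _ _)).mono_left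
      nhdsWithin_le_nhds hU
  obtain ⟨s, ⟨hs0, hs1⟩, hsV, hsU⟩ :=
    (Eventually.and (Ioo_mem_nhdsGT one_pos) (hV'.and hU')).exists
  refine ⟨lineMap ybar y s, hsV, lineMap p x s,
    ⟨lineMap_mem_of_convex_graph hgph hp hx ⟨hs0.le, hs1.le⟩, hsU⟩, ?_, ?_⟩
  all_goals rw [dist_lineMap_left, Real.norm_of_nonneg hs0.le, dist_comm ybar y]
  · exact mul_pos hs0 (dist_pos.2 hy)
  · calc infDist x (M ybar) / dist y ybar * (s * dist y ybar) = s * infDist x (M ybar) := by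
          field_simp [(dist_pos.2 hy).ne']
      _ ≤ _ := mul_infDist_le_infDist_lineMap ⟨p, hp⟩ hpx hs1.le

end SetValued

theorem stmt6_general {Y X : Type*} [NormedAddCommGroup Y] [NormedSpace ℝ Y]
    [NormedAddCommGroup X] [NormedSpace ℝ X]
    (hrefl : Function.Surjective ⇑(NormedSpace.inclusionInDoubleDual ℝ X))
    (M : Y → Set X)
    (hgph : Convex ℝ {p : Y × X | p.2 ∈ M p.1})
    (ybar : Y) (hdom : (M ybar).Nonempty) (hclosed : IsClosed (M ybar)) :
    lipusc M ybar = ⨆ x ∈ M ybar, clmod M ybar x := by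
  refine le_antisymm ?_ (iSup₂_le fun x _ => clmod_le_lipusc M ybar x)
  set R := ⨆ x ∈ M ybar, clmod M ybar x
  rcases eq_or_ne R ⊤ with hR | hR
  · exact hR ▸ le_top
  rw [← ENNReal.ofReal_toReal hR]
  refine lipusc_le_ofReal ENNReal.toReal_nonneg fun y x hx => ?_
  rcases eq_or_ne y ybar with rfl | hy
  · simp [infDist_zero_of_mem hx]
  obtain ⟨p, hp, hpx⟩ := NormedSpace.exists_dist_eq_infDist_of_surjective hrefl hdom
    (hgph.convex_apply ybar) hclosed x
  have h := (ofReal_infDist_div_dist_le_clmod hgph hx hp hpx hy).trans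
    (le_iSup₂ (f := fun x _ => clmod M ybar x) p hp)
  rwa [ENNReal.ofReal_le_iff_le_toReal hR, div_le_iff₀ (dist_pos.2 hy)] at h

/-- For `M : Y ⇉ X` with `Y` a real normed space and `X` a reflexive real Banach space
(reflexivity: the canonical inclusion into the bidual is surjective), if `gph M` is
nonempty and convex and `M(ȳ)` is closed for some `ȳ ∈ dom M`, then
`Lipusc M(ȳ) = sup_{x ∈ M(ȳ)} clm M(ȳ, x)`. -/
theorem stmt6 {Y X : Type*} [NormedAddCommGroup Y] [NormedSpace ℝ Y]
    [NormedAddCommGroup X] [NormedSpace ℝ X] [CompleteSpace X]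
    (hrefl : Function.Surjective ⇑(NormedSpace.inclusionInDoubleDual ℝ X))
    (M : Y → Set X)
    (hgph : Convex ℝ {p : Y × X | p.2 ∈ M p.1})
    (hne : {p : Y × X | p.2 ∈ M p.1}.Nonempty)
    (ybar : Y) (hdom : (M ybar).Nonempty) (hclosed : IsClosed (M ybar)) :
    lipusc M ybar = ⨆ x ∈ M ybar, clmod M ybar x :=
  stmt6_general hrefl M hgph ybar hdom hclosed
end

section
/- Let F be a face of the polyhedron F(Ā,b̄) = {x : Āx ≤ b̄}, let x ∈ ri F and x̂ ∈ F. If D ⊆ T_{Ā,b̄}(x) and d ∈ ℝⁿ satisfies ā_t'd = 1 for t ∈ D and ā_t'd < 1 for t ∈ T_{Ā,b̄}(x) \ D, then for all sufficiently large λ > 0 the vector d + λ(x − x̂) satisfies ā_t'(d + λ(x − x̂)) = 1 for t ∈ D and ā_t'(d + λ(x − x̂)) < 1 for t ∈ T_{Ā,b̄}(x̂) \ D; in particular D ∈ D_{Ā,b̄}(x̂). -/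
open Matrix

lemma forward_pt {n : ℕ} {F : Set (Fin n → ℝ)}
    {x xhat : Fin n → ℝ} (hx : x ∈ intrinsicInterior ℝ F) (hxhat : xhat ∈ F) :
    ∃ ε > (0:ℝ), x + ε • (x - xhat) ∈ F := by
  obtain ⟨y, hy, hyx⟩ := mem_intrinsicInterior.mp hx
  have hxF : x ∈ F := intrinsicInterior_subset hx
  have hmem : ∀ t : ℝ, (1 + t) • (x - xhat) + xhat ∈ affineSpan ℝ F := by
    intro t
    have := AffineMap.lineMap_mem (Q := affineSpan ℝ F) (p₀ := xhat) (p₁ := x) (1 + t)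
      (mem_affineSpan ℝ hxhat) (mem_affineSpan ℝ hxF)
    simpa [AffineMap.lineMap_apply] using this
  set c : ℝ → affineSpan ℝ F := fun t => ⟨(1 + t) • (x - xhat) + xhat, hmem t⟩ with hc
  have hcont : Continuous c := by
    apply Continuous.subtype_mk
    fun_prop
  have hc0 : c 0 = y := by
    apply Subtype.ext
    simp [hc, hyx]
  have hopen : IsOpen (c ⁻¹' interior ((↑) ⁻¹' F : Set (affineSpan ℝ F))) :=
    isOpen_interior.preimage hcont
  have h0 : (0:ℝ) ∈ c ⁻¹' interior ((↑) ⁻¹' F : Set (affineSpan ℝ F)) := by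
    simp only [Set.mem_preimage, hc0]; exact hy
  obtain ⟨r, hr, hball⟩ := Metric.isOpen_iff.mp hopen 0 h0
  refine ⟨r / 2, by linarith, ?_⟩
  have : (r/2 : ℝ) ∈ Metric.ball (0:ℝ) r := by
    rw [Metric.mem_ball, Real.dist_eq, sub_zero, abs_of_pos (by linarith)]; linarith
  have := interior_subset (hball this)
  simp only [Set.mem_preimage, hc] at this
  have : (1 + r/2) • (x - xhat) + xhat ∈ F := this
  convert this using 1
  module

/-- Let `F` be a face of the polyhedron `{z : ∀ t, a_t'z ≤ b_t}`, `x ∈ ri F`, `x̂ ∈ F`.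
If `D ⊆ T(x)` and `d` solves `a_t'd = 1 (t ∈ D)`, `a_t'd < 1 (t ∈ T(x) \ D)`, then for
all sufficiently large `λ > 0`, `d + λ(x − x̂)` solves the corresponding system at `x̂`;
in particular `D ∈ 𝒟(x̂)`. -/
theorem stmt8 {m n : ℕ} (a : Fin m → (Fin n → ℝ)) (b : Fin m → ℝ)
    (C : Set (Fin n → ℝ)) (hC : C = {z | ∀ t, a t ⬝ᵥ z ≤ b t})
    (F : Set (Fin n → ℝ)) (hface : IsExtreme ℝ C F) (hconv : Convex ℝ F)
    (x : Fin n → ℝ) (hx : x ∈ intrinsicInterior ℝ F)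
    (xhat : Fin n → ℝ) (hxhat : xhat ∈ F)
    (D : Set (Fin m)) (hD : D ⊆ {t | a t ⬝ᵥ x = b t})
    (d : Fin n → ℝ) (hd1 : ∀ t ∈ D, a t ⬝ᵥ d = 1)
    (hd2 : ∀ t ∈ {t | a t ⬝ᵥ x = b t} \ D, a t ⬝ᵥ d < 1) :
    (∃ Λ > (0 : ℝ), ∀ lam ≥ Λ,
      (∀ t ∈ D, a t ⬝ᵥ (d + lam • (x - xhat)) = 1) ∧
      (∀ t ∈ {t | a t ⬝ᵥ xhat = b t} \ D, a t ⬝ᵥ (d + lam • (x - xhat)) < 1)) ∧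
    (D ⊆ {t | a t ⬝ᵥ xhat = b t} ∧
      ∃ d' : Fin n → ℝ, (∀ t ∈ D, a t ⬝ᵥ d' = 1) ∧
        ∀ t ∈ {t | a t ⬝ᵥ xhat = b t} \ D, a t ⬝ᵥ d' < 1) := by
  have hFC : F ⊆ C := hface.1
  have hxF : x ∈ F := intrinsicInterior_subset hx
  have hxC : ∀ t, a t ⬝ᵥ x ≤ b t := by have := hFC hxF; rw [hC] at this; exact this
  have hxhatC : ∀ t, a t ⬝ᵥ xhat ≤ b t := by have := hFC hxhat; rw [hC] at this; exact this
  obtain ⟨ε, hε, hyF⟩ := forward_pt hx hxhat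
  have hyC : ∀ t, a t ⬝ᵥ (x + ε • (x - xhat)) ≤ b t := by
    have := hFC hyF; rw [hC] at this; exact this
  have hact : ∀ t, a t ⬝ᵥ x = b t → a t ⬝ᵥ xhat = b t := by
    intro t ht
    have h1 := hyC t
    have h2 := hxhatC t
    rw [dotProduct_add, dotProduct_smul, dotProduct_sub, ht, smul_eq_mul] at h1
    nlinarith
  have hzero : ∀ t, a t ⬝ᵥ x = b t → a t ⬝ᵥ (x - xhat) = 0 := by
    intro t ht; rw [dotProduct_sub, ht, hact t ht, sub_self]
  set S : ℝ := ∑ t : Fin m, |a t ⬝ᵥ d - 1| / (b t - a t ⬝ᵥ x) with hS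
  have hterm : ∀ t : Fin m, (0:ℝ) ≤ |a t ⬝ᵥ d - 1| / (b t - a t ⬝ᵥ x) := fun t =>
    div_nonneg (abs_nonneg _) (sub_nonneg.2 (hxC t))
  have hSnn : 0 ≤ S := Finset.sum_nonneg fun t _ => hterm t
  have key : ∀ lam ≥ 1 + S,
      (∀ t ∈ D, a t ⬝ᵥ (d + lam • (x - xhat)) = 1) ∧
      (∀ t ∈ {t | a t ⬝ᵥ xhat = b t} \ D, a t ⬝ᵥ (d + lam • (x - xhat)) < 1) := by
    intro lam hlam
    constructor
    · intro t ht
      rw [dotProduct_add, dotProduct_smul, hzero t (hD ht), hd1 t ht, smul_zero, add_zero]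
    · rintro t ⟨ht, htD⟩
      rw [dotProduct_add, dotProduct_smul, smul_eq_mul]
      by_cases hx' : a t ⬝ᵥ x = b t
      · rw [hzero t hx', mul_zero, add_zero]
        exact hd2 t ⟨hx', htD⟩
      · have hδ : 0 < b t - a t ⬝ᵥ x := lt_of_le_of_ne (sub_nonneg.2 (hxC t)) (by
          intro h; exact hx' (by linarith))
        have hsub : a t ⬝ᵥ (x - xhat) = -(b t - a t ⬝ᵥ x) := by
          rw [dotProduct_sub, Set.mem_setOf_eq.mp ht]; ring
        rw [hsub]
        have h1 : |a t ⬝ᵥ d - 1| / (b t - a t ⬝ᵥ x) ≤ S :=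
          Finset.single_le_sum (fun t _ => hterm t) (Finset.mem_univ t)
        have h2 : |a t ⬝ᵥ d - 1| ≤ S * (b t - a t ⬝ᵥ x) := by
          rw [div_le_iff₀ hδ] at h1; linarith
        have h3 : a t ⬝ᵥ d - 1 ≤ |a t ⬝ᵥ d - 1| := le_abs_self _
        nlinarith [mul_le_mul_of_nonneg_right hlam hδ.le]
  refine ⟨⟨1 + S, by linarith, key⟩, fun t ht => hact t (hD ht),
    d + (1 + S) • (x - xhat), (key (1 + S) le_rfl).1, (key (1 + S) le_rfl).2⟩
end

section
/- Let C = F(Ā,b̄) = {x ∈ ℝⁿ : Āx ≤ b̄} be nonempty and closed, let x ∉ C, let z be a projection of x onto C (i.e., ‖x − z‖ = dist(x, C)), and for λ ∈ [0,1] define x^λ = λx + (1−λ)z. Then dist(x^λ, C) = λ dist(x, C) and ‖(Āx^λ − b̄)₊‖_∞ ≤ λ‖(Āx − b̄)₊‖_∞; consequently dist(x, C)/‖(Āx − b̄)₊‖_∞ ≤ dist(x^λ, C)/‖(Āx^λ − b̄)₊‖_∞ for all λ ∈ (0,1]. -/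
open Metric

/-- Let `C = {y : ∀ t, a_t y ≤ b_t}` be nonempty, `x ∉ C`, `z` a projection of `x`
onto `C`, and `x^λ = λx + (1−λ)z`. Then `dist(x^λ, C) = λ dist(x, C)`,
`‖(Ax^λ − b)₊‖_∞ ≤ λ‖(Ax − b)₊‖_∞`, and the residual-normalized distance is
monotone: `dist(x,C)/‖(Ax−b)₊‖_∞ ≤ dist(x^λ,C)/‖(Ax^λ−b)₊‖_∞` for `λ ∈ (0,1]`. -/
theorem stmt10 {E : Type*} [NormedAddCommGroup E] [NormedSpace ℝ E]
    [FiniteDimensional ℝ E] {m : ℕ} [NeZero m]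
    (a : Fin m → (E →L[ℝ] ℝ)) (b : Fin m → ℝ)
    (C : Set E) (hC : C = {y | ∀ t, a t y ≤ b t}) (hne : C.Nonempty)
    (x : E) (hx : x ∉ C) (z : E) (hz : z ∈ C) (hproj : ‖x - z‖ = infDist x C) :
    (∀ lam ∈ Set.Icc (0 : ℝ) 1,
      infDist (lam • x + (1 - lam) • z) C = lam * infDist x C ∧
      (⨆ t : Fin m, max (a t (lam • x + (1 - lam) • z) - b t) 0) ≤
        lam * ⨆ t : Fin m, max (a t x - b t) 0) ∧
    ∀ lam ∈ Set.Ioc (0 : ℝ) 1,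
      infDist x C / (⨆ t : Fin m, max (a t x - b t) 0) ≤
        infDist (lam • x + (1 - lam) • z) C /
          ⨆ t : Fin m, max (a t (lam • x + (1 - lam) • z) - b t) 0 := by
  classical
  have hm : Nonempty (Fin m) := Fin.pos_iff_nonempty.mp (NeZero.pos m)
  have hbdd : ∀ y : E, BddAbove (Set.range fun t : Fin m => max (a t y - b t) 0) :=
    fun y => (Set.finite_range _).bddAbove
  have hclosed : IsClosed C := by
    rw [hC]
    have h : {y : E | ∀ t, a t y ≤ b t} = ⋂ t, {y | a t y ≤ b t} := by
      ext y; simp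
    rw [h]
    exact isClosed_iInter fun t => isClosed_le (a t).continuous continuous_const
  have hD : 0 < infDist x C := (hclosed.notMem_iff_infDist_pos hne).1 hx
  -- main first part
  have main : ∀ lam ∈ Set.Icc (0 : ℝ) 1,
      infDist (lam • x + (1 - lam) • z) C = lam * infDist x C ∧
      (⨆ t : Fin m, max (a t (lam • x + (1 - lam) • z) - b t) 0) ≤
        lam * ⨆ t : Fin m, max (a t x - b t) 0 := by
    intro lam hlam
    obtain ⟨h0, h1⟩ := hlam
    set w := lam • x + (1 - lam) • z with hw
    have hwz : w - z = lam • (x - z) := by rw [hw]; module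
    have hxw : x - w = (1 - lam) • (x - z) := by rw [hw]; module
    have hdist : infDist w C = lam * infDist x C := by
      have hub : infDist w C ≤ lam * infDist x C := by
        calc infDist w C ≤ dist w z := infDist_le_dist_of_mem hz
        _ = ‖w - z‖ := by rw [dist_eq_norm]
        _ = lam * infDist x C := by
            rw [hwz, norm_smul, Real.norm_eq_abs, abs_of_nonneg h0, hproj]
      have hlb : infDist x C ≤ infDist w C + dist x w :=
        infDist_le_infDist_add_dist
      have hdxw : dist x w = (1 - lam) * infDist x C := by
        rw [dist_eq_norm, hxw, norm_smul, Real.norm_eq_abs,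
          abs_of_nonneg (by linarith), hproj]
      rw [hdxw] at hlb
      linarith
    refine ⟨hdist, ?_⟩
    have key : ∀ t : Fin m, max (a t w - b t) 0 ≤ lam * max (a t x - b t) 0 := by
      intro t
      have hz' : a t z ≤ b t := by
        rw [hC] at hz; exact hz t
      have hval : a t w - b t = lam * (a t x - b t) + (1 - lam) * (a t z - b t) := by
        rw [hw]; simp [map_add, map_smul]; ring
      have h2 : a t w - b t ≤ lam * (a t x - b t) := by
        rw [hval]; nlinarith
      have h3 : lam * (a t x - b t) ≤ lam * max (a t x - b t) 0 :=
        mul_le_mul_of_nonneg_left (le_max_left _ _) h0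
      exact max_le (h2.trans h3) (mul_nonneg h0 (le_max_right _ _))
    refine ciSup_le fun t => (key t).trans ?_
    exact mul_le_mul_of_nonneg_left (le_ciSup (hbdd x) t) h0
  refine ⟨main, ?_⟩
  intro lam hlam
  obtain ⟨h0, h1⟩ := hlam
  obtain ⟨hdist, hres⟩ := main lam ⟨h0.le, h1⟩
  set w := lam • x + (1 - lam) • z with hw
  set R := ⨆ t : Fin m, max (a t x - b t) 0 with hR
  set Rw := ⨆ t : Fin m, max (a t w - b t) 0 with hRw
  have hRpos : 0 < R := by
    rw [hC] at hx
    simp only [Set.mem_setOf_eq, not_forall, not_le] at hx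
    obtain ⟨t, ht⟩ := hx
    calc (0 : ℝ) < max (a t x - b t) 0 := by simp [lt_max_iff]; linarith
    _ ≤ R := le_ciSup (hbdd x) t
  have hRwpos : 0 < Rw := by
    by_contra h
    push_neg at h
    have hwC : w ∈ C := by
      rw [hC]
      intro t
      have := (le_ciSup (hbdd w) t).trans h
      have h2 := le_max_right (a t w - b t) (0 : ℝ)
      have h3 : max (a t w - b t) 0 = 0 := le_antisymm this h2
      nlinarith [le_max_left (a t w - b t) (0 : ℝ)]
    have : infDist w C = 0 := infDist_zero_of_mem hwC
    rw [hdist] at this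
    nlinarith
  rw [hdist]
  have heq : infDist x C / R = lam * infDist x C / (lam * R) := by
    rw [mul_div_mul_left _ _ (ne_of_gt h0)]
  rw [heq]
  gcongr
end

section
/- In ℝⁿ with n ≥ 2, every nonempty closed convex set that is unbounded and different from ℝⁿ has unbounded topological boundary; i.e., there exists a sequence (z_k) in the boundary of the set with ‖z_k‖ → +∞. -/
open Filter

/-- A preconnected set meeting both a set and its complement meets its frontier. -/
lemma preconnected_inter_frontier {X : Type*} [TopologicalSpace X] {s t : Set X}
    (hs : IsPreconnected s) (h1 : (s ∩ t).Nonempty) (h2 : (s \ t).Nonempty) :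
    (s ∩ frontier t).Nonempty := by
  by_contra h
  rw [Set.not_nonempty_iff_eq_empty] at h
  have hsub : s ⊆ interior t ∪ interior tᶜ := by
    intro x hx
    have hxf : x ∉ frontier t := fun hf => (Set.eq_empty_iff_forall_notMem.1 h x) ⟨hx, hf⟩
    by_cases hxc : x ∈ closure t
    · left
      rcases (em (x ∈ interior t)) with h' | h'
      · exact h'
      · exact absurd ⟨hxc, h'⟩ hxf
    · right
      rw [interior_compl]
      exact hxc
  have hu : (s ∩ interior t).Nonempty := by
    obtain ⟨x, hxs, hxt⟩ := h1
    have hxf : x ∉ frontier t := fun hf => (Set.eq_empty_iff_forall_notMem.1 h x) ⟨hxs, hf⟩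
    refine ⟨x, hxs, ?_⟩
    by_contra h'
    exact hxf ⟨subset_closure hxt, h'⟩
  have hv : (s ∩ interior tᶜ).Nonempty := by
    obtain ⟨x, hxs, hxt⟩ := h2
    have hxf : x ∉ frontier t := fun hf => (Set.eq_empty_iff_forall_notMem.1 h x) ⟨hxs, hf⟩
    refine ⟨x, hxs, ?_⟩
    rw [interior_compl]
    intro hxc
    exact hxf ⟨hxc, fun h'' => hxt (interior_subset h'')⟩
  obtain ⟨x, _, hx1, hx2⟩ := hs (interior t) (interior tᶜ) isOpen_interior isOpen_interior
    hsub hu hv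
  rw [interior_compl] at hx2
  exact hx2 (subset_closure (interior_subset hx1))

/-- In `ℝⁿ` with `n ≥ 2`, every nonempty closed convex set which is unbounded and
different from the whole space has unbounded topological boundary. -/
theorem stmt11 {n : ℕ} (hn : 2 ≤ n) (C : Set (EuclideanSpace ℝ (Fin n)))
    (hclosed : IsClosed C) (hconv : Convex ℝ C) (hne : C.Nonempty)
    (hunbdd : ¬Bornology.IsBounded C) (hne' : C ≠ Set.univ) :
    ∃ z : ℕ → EuclideanSpace ℝ (Fin n),
      (∀ k, z k ∈ frontier C) ∧ Tendsto (fun k => ‖z k‖) atTop atTop := by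
  classical
  -- a point outside C
  obtain ⟨p, hp⟩ : ∃ p, p ∉ C := by
    by_contra h
    push_neg at h
    exact hne' (Set.eq_univ_of_forall h)
  obtain ⟨q, hq⟩ := hne
  -- separate
  obtain ⟨f, u, hfC, hup⟩ := geometric_hahn_banach_closed_point hconv hclosed hp
  have hfq : f q < u := hfC q hq
  have hw : 0 < f (p - q) := by
    rw [map_sub]; linarith
  have hwne : p - q ≠ 0 := by
    intro h; rw [h, map_zero] at hw; exact lt_irrefl 0 hw
  set v : EuclideanSpace ℝ (Fin n) := ‖p - q‖⁻¹ • (p - q) with hv_def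
  have hnorm_pos : (0:ℝ) < ‖p - q‖ := norm_pos_iff.2 hwne
  have hfv : 0 < f v := by
    rw [hv_def, map_smul]
    exact mul_pos (inv_pos.2 hnorm_pos) hw
  have hvnorm : ‖v‖ = 1 := by
    rw [hv_def, norm_smul, norm_inv, norm_norm, inv_mul_cancel₀ hnorm_pos.ne']
  -- radii
  set r : ℕ → ℝ := fun k => max ((u - f q) / f v + 1) (k + 1) with hr_def
  have hr_pos : ∀ k, 0 < r k := by
    intro k
    have : (0:ℝ) < (k:ℝ) + 1 := by positivity
    exact lt_of_lt_of_le this (le_max_right _ _)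
  have hr_big : ∀ k, (u - f q) / f v < r k :=
    fun k => lt_of_lt_of_le (lt_add_one _) (le_max_left _ _)
  have hrank : 1 < Module.rank ℝ (EuclideanSpace ℝ (Fin n)) := by
    rw [← Module.finrank_eq_rank]
    have : Module.finrank ℝ (EuclideanSpace ℝ (Fin n)) = n := finrank_euclideanSpace_fin
    rw [this]
    exact_mod_cast lt_of_lt_of_le one_lt_two hn
  -- for each k, the sphere of radius r k around q meets the frontier
  have key : ∀ k : ℕ, ∃ z, z ∈ frontier C ∧ ‖z - q‖ = r k := by
    intro k
    have hsph : IsPreconnected (Metric.sphere q (r k)) :=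
      isPreconnected_sphere hrank q (r k)
    -- a point of C on the sphere
    have hC_sphere : (Metric.sphere q (r k) ∩ C).Nonempty := by
      obtain ⟨x, hxC, hx_norm⟩ : ∃ x ∈ C, r k + ‖q‖ < ‖x‖ := by
        by_contra h
        push_neg at h
        exact hunbdd (isBounded_iff_forall_norm_le.2 ⟨r k + ‖q‖, h⟩)
      have hxq : r k < ‖x - q‖ := by
        have := norm_sub_norm_le x q
        linarith [norm_sub_norm_le x q]
      set t : ℝ := r k / ‖x - q‖ with ht_def
      have hxq_pos : (0:ℝ) < ‖x - q‖ := lt_trans (hr_pos k) hxq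
      have ht0 : 0 < t := div_pos (hr_pos k) hxq_pos
      have ht1 : t ≤ 1 := by
        rw [ht_def, div_le_one hxq_pos]; exact le_of_lt hxq
      have hyC : (1 - t) • q + t • x ∈ C :=
        hconv hq hxC (by linarith) (le_of_lt ht0) (by ring)
      refine ⟨(1 - t) • q + t • x, ?_, hyC⟩
      rw [Metric.mem_sphere, dist_eq_norm]
      have : (1 - t) • q + t • x - q = t • (x - q) := by
        rw [sub_smul, one_smul, smul_sub]; abel
      rw [this, norm_smul, Real.norm_eq_abs, abs_of_pos ht0, ht_def,
        div_mul_cancel₀ _ hxq_pos.ne']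
    -- a point outside C on the sphere
    have hCc_sphere : (Metric.sphere q (r k) \ C).Nonempty := by
      refine ⟨q + r k • v, ?_, ?_⟩
      · rw [Metric.mem_sphere, dist_eq_norm]
        have : q + r k • v - q = r k • v := by abel
        rw [this, norm_smul, Real.norm_eq_abs, abs_of_pos (hr_pos k), hvnorm, mul_one]
      · intro hmem
        have h1 : f (q + r k • v) < u := hfC _ hmem
        have h2 : f (q + r k • v) = f q + r k * f v := by
          rw [map_add, map_smul]; rfl
        have h3 : u - f q < r k * f v := by
          have := (div_lt_iff₀ hfv).1 (hr_big k)
          linarith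
        linarith
    obtain ⟨z, hz_sph, hz_fr⟩ :=
      preconnected_inter_frontier hsph hC_sphere hCc_sphere
    exact ⟨z, hz_fr, by rwa [Metric.mem_sphere, dist_eq_norm] at hz_sph⟩
  choose z hz_fr hz_norm using key
  refine ⟨z, hz_fr, ?_⟩
  have hlow : ∀ k : ℕ, (k:ℝ) + 1 - ‖q‖ ≤ ‖z k‖ := by
    intro k
    have h1 : ‖z k - q‖ - ‖q‖ ≤ ‖z k‖ := by
      linarith [norm_sub_le (z k) q]
    have h2 : (k:ℝ) + 1 ≤ r k := le_max_right _ _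
    rw [hz_norm k] at h1
    linarith
  refine tendsto_atTop_mono hlow ?_
  have : Tendsto (fun k : ℕ => (k:ℝ)) atTop atTop := tendsto_natCast_atTop_atTop
  exact tendsto_atTop_add_const_right _ _ (tendsto_atTop_add_const_right _ 1 this)
end

section
/- Consider in ℝ (n = 1) the single-inequality system x ≤ α with nominal data ā = 1, b̄ = α, so F(ā, b̄) = (−∞, α]. Then the Lipschitz upper semicontinuity modulus of the fully perturbed feasible mapping F(a,b) = {x ∈ ℝ : ax ≤ b} at (1, α) equals |α| + 1; consequently, letting α → +∞, the (global) Hoffman constant of F over its domain is infinite. -/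
/-!
Upper bound: if `(a, b)` is within `δ` of `(1, α)` and `a x ≤ b` with `x > α`, then
`(1 - δ)(x - α) ≤ a (x - α) ≤ (b - α) + α (1 - a) ≤ (|α| + 1) δ`.
Lower bound: with `σ = ±1` chosen so that `σ α = |α|`, the perturbed datum
`(1 - σ δ, α + δ)` has solution `x = (α + δ) / (1 - σ δ)`, at distance
`δ (|α| + 1) / (1 - σ δ)` from `(-∞, α]`; letting `δ → 0⁺` forces `κ ≥ |α| + 1`.
A global Hoffman constant `κ` would be an admissible modulus at every `(1, α)`,
which is impossible for `α = max κ 0`.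
-/

open Metric

/-- Lipschitz upper semicontinuity modulus of the fully perturbed feasible mapping
`F(a,b) = {x : a·x ≤ b}` in one variable, at the nominal parameter `(ā, b̄)`, with the
parameter norm `‖(a,b)‖ = max {|a|, |b|}` (value in `ℝ≥0∞`, `inf ∅ = ∞`). -/
noncomputable def lipuscF1 (abar bbar : ℝ) : ENNReal :=
  sInf (ENNReal.ofReal '' {κ : ℝ | 0 ≤ κ ∧ ∃ ε > (0 : ℝ),
    ∀ a b : ℝ, max |a - abar| |b - bbar| < ε →
      ∀ x : ℝ, a * x ≤ b →
        infDist x {z : ℝ | abar * z ≤ bbar} ≤ κ * max |a - abar| |b - bbar|})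

open Set Filter Topology

lemma Real.infDist_Iic (x α : ℝ) : infDist x (Iic α) = max (x - α) 0 := by
  refine le_antisymm ?_ ((le_infDist nonempty_Iic).2 fun y hy ↦ ?_)
  · rcases le_total x α with hx | hx
    · simp [infDist_zero_of_mem (show x ∈ Iic α from hx)]
    · rw [max_eq_left (sub_nonneg.2 hx)]
      simpa [Real.dist_eq, abs_of_nonneg (sub_nonneg.2 hx)] using
        infDist_le_dist_of_mem (x := x) (self_mem_Iic (a := α))
  · rw [Real.dist_eq]
    exact max_le (by linarith [le_abs_self (x - y), mem_Iic.1 hy]) (abs_nonneg _)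

/-- `lipuscF1 abar bbar` is the infimum of the `κ` with `IsLipuscBound abar bbar κ`. -/
def IsLipuscBound (abar bbar κ : ℝ) : Prop :=
  0 ≤ κ ∧ ∃ ε > (0 : ℝ), ∀ a b : ℝ, max |a - abar| |b - bbar| < ε →
    ∀ x : ℝ, a * x ≤ b → infDist x {z : ℝ | abar * z ≤ bbar} ≤ κ * max |a - abar| |b - bbar|

lemma ENNReal.sInf_ofReal_image_eq {S : Set ℝ} {c : ℝ} (hc : 0 ≤ c) (hlow : ∀ κ ∈ S, c ≤ κ)
    (hup : Ioi c ⊆ S) : sInf (ENNReal.ofReal '' S) = ENNReal.ofReal c := by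
  refine le_antisymm (ENNReal.le_of_forall_pos_le_add fun η hη _ ↦ ?_) ?_
  · calc sInf (ENNReal.ofReal '' S) ≤ ENNReal.ofReal (c + η) :=
          sInf_le (mem_image_of_mem _ (hup (by simpa using hη)))
      _ = ENNReal.ofReal c + η := by
          rw [ENNReal.ofReal_add hc η.coe_nonneg, ENNReal.ofReal_coe_nnreal]
  · exact le_sInf (forall_mem_image.2 fun κ hκ ↦ ENNReal.ofReal_le_ofReal (hlow κ hκ))

lemma setOf_one_mul_le (α : ℝ) : {z : ℝ | 1 * z ≤ α} = Iic α := by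
  ext; simp

lemma one_sub_mul_infDist_Iic_le {a b α x δ : ℝ} (ha : |a - 1| ≤ δ) (hb : |b - α| ≤ δ)
    (hx : a * x ≤ b) : (1 - δ) * infDist x (Iic α) ≤ (|α| + 1) * δ := by
  have hδ : 0 ≤ δ := (abs_nonneg _).trans ha
  rw [Real.infDist_Iic]
  rcases le_total x α with hxα | hαx
  · rw [max_eq_right (sub_nonpos.2 hxα), mul_zero]
    positivity
  · rw [max_eq_left (sub_nonneg.2 hαx)]
    have hαa : α * (1 - a) ≤ |α| * δ := by
      calc α * (1 - a) ≤ |α| * |a - 1| := by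
            rw [← abs_sub_comm, ← abs_mul]; exact le_abs_self _
        _ ≤ |α| * δ := by gcongr
    calc (1 - δ) * (x - α) ≤ a * (x - α) := by
          gcongr; linarith [neg_abs_le (a - 1)]
      _ ≤ (b - α) + α * (1 - a) := by linarith
      _ ≤ (|α| + 1) * δ := by linarith [le_abs_self (b - α)]

lemma isLipuscBound_one_of_lt {α κ : ℝ} (hκ : |α| + 1 < κ) : IsLipuscBound 1 α κ := by
  have hκ0 : 0 < κ := by linarith [abs_nonneg α]
  refine ⟨hκ0.le, 1 - (|α| + 1) / κ, sub_pos.2 ((div_lt_one hκ0).2 hκ), ?_⟩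
  intro a b hδ x hx
  have hsol := one_sub_mul_infDist_Iic_le (le_max_left _ _) (le_max_right |a - 1| |b - α|) hx
  set δ := max |a - 1| |b - α|
  have hδκ : |α| + 1 ≤ κ * (1 - δ) := by
    rw [lt_sub_comm, div_lt_iff₀ hκ0] at hδ
    linarith
  rw [setOf_one_mul_le]
  refine le_of_mul_le_mul_left ?_ (show 0 < |α| + 1 by positivity)
  calc (|α| + 1) * infDist x (Iic α) ≤ κ * ((1 - δ) * infDist x (Iic α)) := by
        rw [← mul_assoc]; gcongr; exact infDist_nonneg
    _ ≤ κ * ((|α| + 1) * δ) := by gcongr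
    _ = (|α| + 1) * (κ * δ) := by ring

lemma infDist_add_div_one_sub_mul_Iic {α σ δ : ℝ} (hσ : σ * α = |α|) (hδ : 0 ≤ δ) (hσδ : σ * δ < 1) :
    infDist ((α + δ) / (1 - σ * δ)) (Iic α) = δ * (|α| + 1) / (1 - σ * δ) := by
  have hpos : 0 < 1 - σ * δ := sub_pos.2 hσδ
  have hsub : (α + δ) / (1 - σ * δ) - α = δ * (|α| + 1) / (1 - σ * δ) := by
    rw [div_sub' hpos.ne', ← hσ]; ring_nf
  rw [Real.infDist_Iic, hsub, max_eq_left (by positivity)]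

lemma IsLipuscBound.abs_add_one_le {α κ : ℝ} (h : IsLipuscBound 1 α κ) : |α| + 1 ≤ κ := by
  obtain ⟨hκ0, ε, hε, hbound⟩ := h
  obtain ⟨σ, hσ1, hσ⟩ : ∃ σ : ℝ, |σ| = 1 ∧ σ * α = |α| := by
    rcases le_total 0 α with hα | hα
    · exact ⟨1, by simp, by simp [abs_of_nonneg hα]⟩
    · exact ⟨-1, by simp, by simp [abs_of_nonpos hα]⟩
  have hperturb : ∀ δ ∈ Ioo 0 (min ε 1), |α| + 1 ≤ κ * (1 + δ) := by
    rintro δ ⟨hδ0, hδ⟩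
    have hσδ : |σ * δ| = δ := by rw [abs_mul, hσ1, one_mul, abs_of_pos hδ0]
    have hσδ1 : σ * δ < 1 :=
      (le_abs_self _).trans_lt (hσδ.symm ▸ hδ.trans_le (min_le_right _ _))
    have hpos : 0 < 1 - σ * δ := sub_pos.2 hσδ1
    have hdist : max |(1 - σ * δ) - 1| |(α + δ) - α| = δ := by
      simp [abs_neg, hσδ, abs_of_pos hδ0]
    have := hbound (1 - σ * δ) (α + δ) (by rw [hdist]; exact hδ.trans_le (min_le_left _ _))
      ((α + δ) / (1 - σ * δ)) (mul_div_cancel₀ _ hpos.ne').le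
    rw [setOf_one_mul_le, infDist_add_div_one_sub_mul_Iic hσ hδ0.le hσδ1, hdist, div_le_iff₀ hpos] at this
    have : |α| + 1 ≤ κ * (1 - σ * δ) := le_of_mul_le_mul_left (by linarith) hδ0
    nlinarith [neg_abs_le (σ * δ)]
  have hlim : Tendsto (fun δ ↦ κ * (1 + δ)) (𝓝[>] 0) (𝓝 κ) := by
    exact (Continuous.tendsto' (by fun_prop) 0 κ (by simp)).mono_left nhdsWithin_le_nhds
  exact ge_of_tendsto hlim (eventually_of_mem (Ioo_mem_nhdsGT (lt_min hε one_pos)) hperturb)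

lemma lipuscF1_one (α : ℝ) : lipuscF1 1 α = ENNReal.ofReal (|α| + 1) :=
  ENNReal.sInf_ofReal_image_eq (by positivity) (fun _ ↦ IsLipuscBound.abs_add_one_le)
    (fun _ ↦ isLipuscBound_one_of_lt)

lemma isLipuscBound_max_zero_of_forall {abar bbar κ : ℝ}
    (h : ∀ a b x : ℝ, a * x ≤ b →
      infDist x {z : ℝ | abar * z ≤ bbar} ≤ κ * max |a - abar| |b - bbar|) :
    IsLipuscBound abar bbar (max κ 0) :=
  ⟨le_max_right _ _, 1, one_pos, fun a b _ x hx ↦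
    (h a b x hx).trans (mul_le_mul_of_nonneg_right (le_max_left _ _) (by positivity))⟩

/-- For the single inequality `x ≤ α` (nominal data `ā = 1`, `b̄ = α`, feasible set
`(−∞, α]`), the Lipschitz upper semicontinuity modulus of `F` at `(1, α)` equals
`|α| + 1`; consequently (letting `α → +∞`) the global Hoffman constant of `F` over
its domain is infinite. -/
theorem stmt14 :
    (∀ α : ℝ, lipuscF1 1 α = ENNReal.ofReal (|α| + 1)) ∧
    ¬∃ κ : ℝ, ∀ a₁ b₁ a₂ b₂ x₁ : ℝ,
        ({x : ℝ | a₂ * x ≤ b₂}).Nonempty → a₁ * x₁ ≤ b₁ →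
        infDist x₁ {x : ℝ | a₂ * x ≤ b₂} ≤ κ * max |a₁ - a₂| |b₁ - b₂| := by
  refine ⟨lipuscF1_one, ?_⟩
  rintro ⟨κ, hκ⟩
  set α := max κ 0
  have hbound : IsLipuscBound 1 α α := by
    simpa [α] using isLipuscBound_max_zero_of_forall fun a b x hx ↦
      hκ a b 1 α x ⟨α, by simp⟩ hx
  linarith [hbound.abs_add_one_le, le_abs_self α]
end
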